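/- The quantum determinant d ∈ A_{α,β}(n) is group-like: Δ(d) = d ⊗ d and ε(d) = 1. -/

import Mathlib

noncomputable section
open scoped TensorProduct

variable (k : Type) [Field k]

/-- The two-parameter quantum matrix relations on the free algebra on generators
`x (i,j)`, `1 ≤ i,j ≤ n` (here indexed by `Fin n`). -/
inductive QRel (n : ℕ) (α β : k) :
    FreeAlgebra k (Fin n × Fin n) → FreeAlgebra k (Fin n × Fin n) → Prop
  | row (i : Fin n) {r s : Fin n} (h : r < s) :
      QRel n α β (FreeAlgebra.ι k (i, s) * FreeAlgebra.ι k (i, r))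
        (α • (FreeAlgebra.ι k (i, r) * FreeAlgebra.ι k (i, s)))
  | col {i j : Fin n} (r : Fin n) (h : i < j) :
      QRel n α β (FreeAlgebra.ι k (j, r) * FreeAlgebra.ι k (i, r))
        (β • (FreeAlgebra.ι k (i, r) * FreeAlgebra.ι k (j, r)))
  | mixed {i j r s : Fin n} (hij : i < j) (hrs : r < s) :
      QRel n α β (FreeAlgebra.ι k (j, r) * FreeAlgebra.ι k (i, s))
        ((α⁻¹ * β) • (FreeAlgebra.ι k (i, s) * FreeAlgebra.ι k (j, r)))
  | diag {i j r s : Fin n} (hij : i < j) (hrs : r < s) :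
      QRel n α β (FreeAlgebra.ι k (j, s) * FreeAlgebra.ι k (i, r))
        (FreeAlgebra.ι k (i, r) * FreeAlgebra.ι k (j, s)
          + (β - α⁻¹) • (FreeAlgebra.ι k (i, s) * FreeAlgebra.ι k (j, r)))

/-- The two-parameter quantum matrix algebra `A_{α,β}(n)`. -/
abbrev QMat (n : ℕ) (α β : k) := RingQuot (QRel k n α β)

/-- The generators `c_{ij}` of `A_{α,β}(n)`. -/
def qc (n : ℕ) (α β : k) (i j : Fin n) : QMat k n α β :=
  RingQuot.mkAlgHom k (QRel k n α β) (FreeAlgebra.ι k (i, j))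

/-- The ordered monomial `c^ω = c₁₁^{ω₁₁} c₁₂^{ω₁₂} ⋯ cₙₙ^{ωₙₙ}`,
with factors taken in lexicographic order of the index `(i,j)`. -/
def qMon (n : ℕ) (α β : k) (ω : Fin n → Fin n → ℕ) : QMat k n α β :=
  ((List.finRange n).map fun i =>
    ((List.finRange n).map fun j => qc k n α β i j ^ ω i j).prod).prod

/-- The relation identifying the generators `c_{is}` with `s > b_i` with `0`
(here in 0-based indexing: `c i s ~ 0` when `b i < s`). -/
def BRel (n : ℕ) (α β : k) (b : Fin n → Fin n) :
    QMat k n α β → QMat k n α β → Prop :=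
  fun x y => (∃ i s : Fin n, b i < s ∧ x = qc k n α β i s) ∧ y = 0

/-- The quotient algebra `A(b) = A_{α,β}(n)/I(b)`. -/
abbrev QB (n : ℕ) (α β : k) (b : Fin n → Fin n) := RingQuot (BRel k n α β b)

/-- The canonical projection `A(n) → A(b)`. -/
def qbProj (n : ℕ) (α β : k) (b : Fin n → Fin n) : QMat k n α β →ₐ[k] QB k n α β b :=
  RingQuot.mkAlgHom k (BRel k n α β b)

/-- The number of inversions (Coxeter length) of a permutation. -/
def invCount {n : ℕ} (σ : Equiv.Perm (Fin n)) : ℕ :=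
  (Finset.univ.filter fun p : Fin n × Fin n => p.1 < p.2 ∧ σ p.2 < σ p.1).card

/-- The two-parameter quantum determinant
`d = Σ_σ (−α)^{−ℓ(σ)} c_{1,σ(1)} ⋯ c_{n,σ(n)}`. -/
def qdet (n : ℕ) (α β : k) : QMat k n α β :=
  ∑ σ : Equiv.Perm (Fin n),
    ((-α)⁻¹ ^ invCount σ) • ((List.finRange n).map fun i => qc k n α β i (σ i)).prod

/-!
Expanding `Δ` on the monomials of `d` gives `Δ(d) = Σ_f c_{1,f(1)} ⋯ c_{n,f(n)} ⊗ d_f`, where `d_f`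
is the quantum determinant taken with rows `f(1), …, f(n)`. Pairing `σ` with `σ ∘ (p p+1)` writes
`d_f` as a combination of quantum `2 × 2` minors in the rows `f(p), f(p+1)`; by the defining
relations such a minor vanishes when the two rows coincide and picks up a factor `(-α)⁻¹` when they
are interchanged. Sorting `f` by adjacent transpositions therefore gives `d_f = 0` unless `f` is a
permutation, and `d_f = (-α)^{-ℓ(f)} d` if it is, so the sum collapses to `d ⊗ d`. Since `ε` is a
character with `ε(c_{ij}) = δ_{ij}`, only the identity term of `d` survives under it.
-/

def inversionCount {n : ℕ} {α : Type*} [LinearOrder α] (a : Fin n → α) : ℕ :=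
  (Finset.univ.filter fun p : Fin n × Fin n => p.1 < p.2 ∧ a p.2 < a p.1).card

lemma invCount_eq_inversionCount {n : ℕ} (σ : Equiv.Perm (Fin n)) :
    invCount σ = inversionCount ⇑σ := rfl

section Inversions

variable {n : ℕ} {α : Type*} [LinearOrder α] {p q : Fin n}

lemma swap_lt_swap_iff (hpq : (p : ℕ) + 1 = q) {x y : Fin n} :
    Equiv.swap p q x < Equiv.swap p q y ↔ (x < y ∧ ¬(x = p ∧ y = q)) ∨ (x = q ∧ y = p) := by
  simp only [Equiv.swap_apply_def, Fin.lt_def, Fin.ext_iff]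
  split_ifs <;> omega

lemma inversionCount_comp_swap (hpq : (p : ℕ) + 1 = q) {a : Fin n → α} (h : a p < a q) :
    inversionCount (a ∘ Equiv.swap p q) = inversionCount a + 1 := by
  classical
  set e := Equiv.swap p q
  rw [inversionCount, ← Finset.card_map (e.prodCongr e).toEmbedding]
  have hpq' : p < q := Fin.lt_def.2 (by omega)
  have hmap : (Finset.univ.filter fun x : Fin n × Fin n =>
        x.1 < x.2 ∧ (a ∘ e) x.2 < (a ∘ e) x.1).map (e.prodCongr e).toEmbedding =
        insert (q, p) (Finset.univ.filter fun x : Fin n × Fin n => x.1 < x.2 ∧ a x.2 < a x.1) := by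
    ext ⟨u, v⟩
    simp only [Finset.mem_map_equiv, Finset.mem_filter, Finset.mem_univ, true_and,
      Finset.mem_insert, Prod.mk.injEq, Equiv.prodCongr_symm, Equiv.prodCongr_apply,
      Prod.map, Function.comp_apply, e, Equiv.symm_swap, Equiv.swap_apply_self,
      swap_lt_swap_iff hpq]
    constructor
    · rintro ⟨(⟨huv, -⟩ | ⟨rfl, rfl⟩), hav⟩
      · exact Or.inr ⟨huv, hav⟩
      · exact Or.inl ⟨rfl, rfl⟩
    · rintro (⟨rfl, rfl⟩ | ⟨huv, hav⟩)
      · exact ⟨Or.inr ⟨rfl, rfl⟩, h⟩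
      · refine ⟨Or.inl ⟨huv, ?_⟩, hav⟩
        rintro ⟨rfl, rfl⟩
        exact lt_asymm h hav
  rw [hmap, Finset.card_insert_of_notMem]
  · rfl
  · rw [Finset.mem_filter]
    exact fun hmem => lt_asymm hpq' hmem.2.1

lemma inversionCount_eq_zero_of_strictMono {a : Fin n → α} (ha : StrictMono a) :
    inversionCount a = 0 := by
  simp only [inversionCount, Finset.card_eq_zero, Finset.filter_eq_empty_iff]
  exact fun x _ hx => lt_asymm (ha hx.1) hx.2

lemma strictMono_of_lt_of_adjacent {a : Fin n → α}
    (h : ∀ p q : Fin n, (p : ℕ) + 1 = q → a p < a q) : StrictMono a := by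
  cases n with
  | zero => exact fun x => x.elim0
  | succ m => exact Fin.strictMono_iff_lt_succ.2 fun i => h _ _ (by simp)

end Inversions

section ListProd

variable {M : Type*}

lemma prod_map_finRange_sum [Semiring M] {J : Type*} [Fintype J] :
    ∀ {N : ℕ} (g : Fin N → J → M), ((List.finRange N).map fun i => ∑ j, g i j).prod =
      ∑ f : Fin N → J, ((List.finRange N).map fun i => g i (f i)).prod
  | 0, g => by simp
  | N + 1, g => by
    simp only [List.finRange_succ, List.map_cons, List.prod_cons, List.map_map,
      Function.comp_def, prod_map_finRange_sum fun i => g i.succ, Finset.sum_mul_sum,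
      ← Fintype.sum_prod_type']
    exact Fintype.sum_equiv (Fin.consEquiv fun _ => J) _ _ fun x => by simp

lemma exists_prod_map_finRange_eq_adjacent [Monoid M] {n : ℕ} {p q : Fin n}
    (hpq : (p : ℕ) + 1 = q) (f : Fin n → M) :
    ∃ L R : M, ∀ g : Fin n → M, (∀ x, x ≠ p → x ≠ q → g x = f x) →
      ((List.finRange n).map g).prod = L * (g p * g q) * R := by
  have hdrop (x : Fin n) : (List.finRange n).drop x = x :: (List.finRange n).drop (x + 1) := by
    rw [List.drop_eq_getElem_cons (by simp), List.getElem_finRange, Fin.cast_mk]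
  have hsplit : List.finRange n = (List.finRange n).take p ++
      p :: q :: (List.finRange n).drop (q + 1) := by
    rw [← hdrop q, ← hpq, ← hdrop p, List.take_append_drop]
  refine ⟨(((List.finRange n).take p).map f).prod,
    (((List.finRange n).drop (q + 1)).map f).prod, fun g hg => ?_⟩
  have hleft : ((List.finRange n).take p).map g = ((List.finRange n).take p).map f :=
    List.map_congr_left fun x hx => by
      obtain ⟨i, hi, rfl⟩ := List.mem_take_iff_getElem.1 hx
      refine hg _ ?_ ?_ <;> simp only [ne_eq, Fin.ext_iff, List.getElem_finRange, Fin.val_cast]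
        <;> omega
  have hright : ((List.finRange n).drop (q + 1)).map g = ((List.finRange n).drop (q + 1)).map f :=
    List.map_congr_left fun x hx => by
      obtain ⟨i, hi, rfl⟩ := List.mem_drop_iff_getElem.1 hx
      refine hg _ ?_ ?_ <;> simp only [ne_eq, Fin.ext_iff, List.getElem_finRange, Fin.val_cast]
        <;> omega
  conv_lhs => rw [hsplit, List.map_append, List.prod_append, hleft, List.map_cons, List.map_cons,
    List.prod_cons, List.prod_cons, hright]
  simp only [mul_assoc]

end ListProd

lemma list_prod_map_tmul {R A B ι : Type*} [CommSemiring R] [Semiring A] [Semiring B]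
    [Algebra R A] [Algebra R B] (l : List ι) (x : ι → A) (y : ι → B) :
    (l.map fun i => x i ⊗ₜ[R] y i).prod = (l.map x).prod ⊗ₜ[R] (l.map y).prod := by
  induction l with
  | nil => rfl
  | cons i l ih =>
    simp only [List.map_cons, List.prod_cons, ih, Algebra.TensorProduct.tmul_mul_tmul]

lemma sum_ite_injective_eq_sum_perm {ι M : Type*} [Fintype ι] [DecidableEq ι] [AddCommMonoid M]
    (g : (ι → ι) → M) :
    ∑ f : ι → ι, (if Function.Injective f then g f else 0) = ∑ σ : Equiv.Perm ι, g σ := by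
  rw [← Finset.sum_filter]
  refine (Finset.sum_bij (fun (σ : Equiv.Perm ι) _ => ⇑σ) (fun σ _ => by simpa using σ.injective)
    (fun _ _ _ _ h => Equiv.coe_fn_injective h) (fun f hf => ?_) fun _ _ => rfl).symm
  have hf : Function.Injective f := by simpa using hf
  exact ⟨Equiv.ofBijective f hf.bijective_of_finite, Finset.mem_univ _, rfl⟩

section QuantumMatrix

variable {k} {n : ℕ} (α β : k)

lemma qc_row_rel (i : Fin n) {r s : Fin n} (h : r < s) :
    qc k n α β i s * qc k n α β i r = α • (qc k n α β i r * qc k n α β i s) := by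
  simpa only [map_mul, map_smul, qc] using RingQuot.mkAlgHom_rel k (QRel.row (α := α) (β := β) i h)

lemma qc_mixed_rel {i j r s : Fin n} (hij : i < j) (hrs : r < s) :
    qc k n α β j r * qc k n α β i s = (α⁻¹ * β) • (qc k n α β i s * qc k n α β j r) := by
  simpa only [map_mul, map_smul, qc] using
    RingQuot.mkAlgHom_rel k (QRel.mixed (α := α) (β := β) hij hrs)

lemma qc_diag_rel {i j r s : Fin n} (hij : i < j) (hrs : r < s) :
    qc k n α β j s * qc k n α β i r =
      qc k n α β i r * qc k n α β j s + (β - α⁻¹) • (qc k n α β i s * qc k n α β j r) := by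
  simpa only [map_mul, map_smul, map_add, qc] using
    RingQuot.mkAlgHom_rel k (QRel.diag (α := α) (β := β) hij hrs)

def qProd (a b : Fin n → Fin n) : QMat k n α β :=
  ((List.finRange n).map fun i => qc k n α β (a i) (b i)).prod

def qminor (u v r s : Fin n) : QMat k n α β :=
  qc k n α β u r * qc k n α β v s + (-α)⁻¹ • (qc k n α β u s * qc k n α β v r)

def qdetRows (a : Fin n → Fin n) : QMat k n α β :=
  ∑ σ : Equiv.Perm (Fin n), ((-α)⁻¹ ^ invCount σ) • qProd α β a σ

lemma qdetRows_id : qdetRows α β (id : Fin n → Fin n) = qdet k n α β := rfl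

variable {p q : Fin n}

lemma exists_qProd_add_qProd_mul_swap_eq (hpq : (p : ℕ) + 1 = q) (a : Fin n → Fin n)
    (σ : Equiv.Perm (Fin n)) :
    ∃ L R : QMat k n α β, ∀ a' : Fin n → Fin n, (∀ x, x ≠ p → x ≠ q → a' x = a x) →
      qProd α β a' σ + (-α)⁻¹ • qProd α β a' ⇑(σ * Equiv.swap p q) =
        L * qminor α β (a' p) (a' q) (σ p) (σ q) * R := by
  obtain ⟨L, R, hLR⟩ := exists_prod_map_finRange_eq_adjacent hpq fun i => qc k n α β (a i) (σ i)
  refine ⟨L, R, fun a' ha' => ?_⟩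
  rw [qProd, qProd, hLR _ fun x hp hq => by rw [ha' x hp hq],
    hLR _ fun x hp hq => by
      rw [ha' x hp hq, Equiv.Perm.mul_apply, Equiv.swap_apply_of_ne_of_ne hp hq]]
  simp only [Equiv.Perm.mul_apply, Equiv.swap_apply_left, Equiv.swap_apply_right, qminor, mul_add,
    add_mul, mul_smul_comm, smul_mul_assoc]

lemma qdetRows_eq_sum_pairs (hpq : (p : ℕ) + 1 = q) (a : Fin n → Fin n) :
    qdetRows α β a = ∑ σ ∈ Finset.univ.filter (fun σ : Equiv.Perm (Fin n) => σ p < σ q),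
      ((-α)⁻¹ ^ invCount σ) • (qProd α β a σ + (-α)⁻¹ • qProd α β a ⇑(σ * Equiv.swap p q)) := by
  have hpq' : p ≠ q := fun h => by rw [h] at hpq; omega
  have hswap (σ : Equiv.Perm (Fin n)) :
      (σ * Equiv.swap p q) p < (σ * Equiv.swap p q) q ↔ σ q < σ p := by
    simp only [Equiv.Perm.mul_apply, Equiv.swap_apply_left, Equiv.swap_apply_right]
  have hdesc : ∑ σ ∈ Finset.univ.filter (fun σ : Equiv.Perm (Fin n) => ¬ σ p < σ q),
        ((-α)⁻¹ ^ invCount σ) • qProd α β a σ =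
      ∑ σ ∈ Finset.univ.filter (fun σ : Equiv.Perm (Fin n) => σ p < σ q),
        ((-α)⁻¹ ^ invCount (σ * Equiv.swap p q)) • qProd α β a ⇑(σ * Equiv.swap p q) := by
    refine Finset.sum_nbij' (· * Equiv.swap p q) (· * Equiv.swap p q) (fun σ hσ => ?_)
      (fun σ hσ => ?_) (fun σ _ => by simp) (fun σ _ => by simp) (fun σ _ => by simp)
    · simp only [Finset.mem_filter, Finset.mem_univ, true_and, hswap] at hσ ⊢
      exact (not_lt.1 hσ).lt_of_ne fun h => hpq' (σ.injective h).symm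
    · simp only [Finset.mem_filter, Finset.mem_univ, true_and, hswap] at hσ ⊢
      exact not_lt.2 hσ.le
  rw [qdetRows, ← Finset.sum_filter_add_sum_filter_not _ fun σ : Equiv.Perm (Fin n) => σ p < σ q,
    hdesc, ← Finset.sum_add_distrib]
  refine Finset.sum_congr rfl fun σ hσ => ?_
  rw [invCount_eq_inversionCount, invCount_eq_inversionCount, Equiv.Perm.coe_mul,
    inversionCount_comp_swap hpq (Finset.mem_filter.1 hσ).2, pow_succ, mul_smul, smul_add]

variable {α}

lemma qminor_self (hα : α ≠ 0) (u : Fin n) {r s : Fin n} (h : r < s) :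
    qminor α β u u r s = 0 := by
  rw [qminor, qc_row_rel α β u h, smul_smul, inv_neg, neg_mul, inv_mul_cancel₀ hα, neg_smul,
    one_smul, add_neg_cancel]

lemma qminor_swap (hα : α ≠ 0) {i j r s : Fin n} (hij : i < j) (hrs : r < s) :
    qminor α β j i r s = (-α)⁻¹ • qminor α β i j r s := by
  rw [qminor, qminor, qc_mixed_rel α β hij hrs, qc_diag_rel α β hij hrs]
  match_scalars
  · field_simp
    ring
  · rfl

lemma qdetRows_eq_zero_of_adjacent_eq (hα : α ≠ 0) (hpq : (p : ℕ) + 1 = q) {a : Fin n → Fin n}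
    (h : a p = a q) : qdetRows α β a = 0 := by
  rw [qdetRows_eq_sum_pairs α β hpq]
  refine Finset.sum_eq_zero fun σ hσ => ?_
  obtain ⟨L, R, hLR⟩ := exists_qProd_add_qProd_mul_swap_eq α β hpq a σ
  rw [hLR a fun _ _ _ => rfl, h, qminor_self β hα _ (Finset.mem_filter.1 hσ).2, mul_zero,
    zero_mul, smul_zero]

lemma qdetRows_eq_smul_of_adjacent_lt (hα : α ≠ 0) (hpq : (p : ℕ) + 1 = q) {a : Fin n → Fin n}
    (h : a q < a p) : qdetRows α β a = (-α)⁻¹ • qdetRows α β (a ∘ Equiv.swap p q) := by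
  rw [qdetRows_eq_sum_pairs α β hpq, qdetRows_eq_sum_pairs α β hpq, Finset.smul_sum]
  refine Finset.sum_congr rfl fun σ hσ => ?_
  obtain ⟨L, R, hLR⟩ := exists_qProd_add_qProd_mul_swap_eq α β hpq a σ
  rw [hLR a fun _ _ _ => rfl,
    hLR _ fun x hp hq => by rw [Function.comp_apply, Equiv.swap_apply_of_ne_of_ne hp hq],
    Function.comp_apply, Function.comp_apply, Equiv.swap_apply_left, Equiv.swap_apply_right,
    qminor_swap β hα h (Finset.mem_filter.1 hσ).2, mul_smul_comm, smul_mul_assoc, smul_comm]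

lemma qdetRows_eq (hα : α ≠ 0) (a : Fin n → Fin n) :
    qdetRows α β a =
      if Function.Injective a then ((-α)⁻¹ ^ inversionCount a) • qdet k n α β else 0 := by
  induction hN : inversionCount a using Nat.strong_induction_on generalizing a with
  | _ N ih =>
  by_cases hasc : ∀ p q : Fin n, (p : ℕ) + 1 = q → a p < a q
  · have ha : a = id := (strictMono_of_lt_of_adjacent hasc).eq_id
    subst ha
    rw [if_pos Function.injective_id, ← hN, inversionCount_eq_zero_of_strictMono strictMono_id,
      pow_zero, one_smul, qdetRows_id]
  push Not at hasc
  obtain ⟨p, q, hpq, hqp⟩ := hasc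
  have hpq' : p ≠ q := fun h => by rw [h] at hpq; omega
  rcases hqp.eq_or_lt with heq | hlt
  · rw [qdetRows_eq_zero_of_adjacent_eq β hα hpq heq.symm, if_neg fun hinj => hpq' (hinj heq.symm)]
  · have hinv : inversionCount a = inversionCount (a ∘ Equiv.swap p q) + 1 := by
      have := inversionCount_comp_swap hpq (a := a ∘ Equiv.swap p q) (by simpa using hlt)
      rwa [Function.comp_assoc, ← Equiv.Perm.coe_mul, Equiv.swap_mul_self, Equiv.Perm.coe_one,
        Function.comp_id] at this
    have hinj : Function.Injective (a ∘ Equiv.swap p q) ↔ Function.Injective a :=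
      Function.Injective.of_comp_iff' a (Equiv.bijective _)
    rw [qdetRows_eq_smul_of_adjacent_lt β hα hpq hlt, ih _ (by omega) _ rfl]
    simp only [hinj]
    split_ifs
    · rw [smul_smul, ← pow_succ', ← hinv, hN]
    · rw [smul_zero]

end QuantumMatrix

section Bialgebra

variable {k} {n : ℕ} {α β : k}

lemma map_qProd (Δ : QMat k n α β →ₐ[k] QMat k n α β ⊗[k] QMat k n α β)
    (hΔ : ∀ i j : Fin n, Δ (qc k n α β i j) = ∑ m : Fin n, qc k n α β i m ⊗ₜ[k] qc k n α β m j)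
    (a b : Fin n → Fin n) :
    Δ (qProd α β a b) = ∑ f : Fin n → Fin n, qProd α β a f ⊗ₜ[k] qProd α β f b := by
  simp only [qProd, map_list_prod, List.map_map, Function.comp_def, hΔ, prod_map_finRange_sum,
    list_prod_map_tmul]

lemma counit_qProd (ε : QMat k n α β →ₐ[k] k)
    (hε : ∀ i j : Fin n, ε (qc k n α β i j) = if i = j then 1 else 0) (a b : Fin n → Fin n) :
    ε (qProd α β a b) = if a = b then 1 else 0 := by
  simp only [qProd, map_list_prod, List.map_map, Function.comp_def, hε, ← Fin.prod_univ_def,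
    Fintype.prod_boole]
  congr 1
  exact propext funext_iff.symm

lemma qdet_eq_sum_qProd : qdet k n α β =
    ∑ σ : Equiv.Perm (Fin n), ((-α)⁻¹ ^ invCount σ) • qProd α β id ⇑σ := rfl

lemma map_qdet (Δ : QMat k n α β →ₐ[k] QMat k n α β ⊗[k] QMat k n α β)
    (hΔ : ∀ i j : Fin n, Δ (qc k n α β i j) = ∑ m : Fin n, qc k n α β i m ⊗ₜ[k] qc k n α β m j) :
    Δ (qdet k n α β) = ∑ f : Fin n → Fin n, qProd α β id f ⊗ₜ[k] qdetRows α β f := by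
  simp only [qdet_eq_sum_qProd, qdetRows, map_sum, map_smul, map_qProd Δ hΔ, Finset.smul_sum,
    TensorProduct.tmul_sum, TensorProduct.tmul_smul]
  exact Finset.sum_comm

lemma counit_qdet (ε : QMat k n α β →ₐ[k] k)
    (hε : ∀ i j : Fin n, ε (qc k n α β i j) = if i = j then 1 else 0) :
    ε (qdet k n α β) = 1 := by
  simp only [qdet_eq_sum_qProd, map_sum, map_smul, counit_qProd ε hε, smul_eq_mul, mul_ite,
    mul_one, mul_zero]
  rw [Fintype.sum_eq_single 1 fun σ hσ => if_neg fun h => hσ (Equiv.coe_fn_injective h.symm),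
    Equiv.Perm.coe_one, if_pos rfl, invCount_eq_inversionCount, Equiv.Perm.coe_one,
    inversionCount_eq_zero_of_strictMono strictMono_id, pow_zero]

end Bialgebra

theorem qdet_grouplike (n : ℕ) (α β : k) (hα : α ≠ 0)
    (Δ : QMat k n α β →ₐ[k] QMat k n α β ⊗[k] QMat k n α β)
    (hΔ : ∀ i j : Fin n, Δ (qc k n α β i j) =
      ∑ m : Fin n, qc k n α β i m ⊗ₜ[k] qc k n α β m j)
    (ε : QMat k n α β →ₐ[k] k)
    (hε : ∀ i j : Fin n, ε (qc k n α β i j) = if i = j then 1 else 0) :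
    Δ (qdet k n α β) = qdet k n α β ⊗ₜ[k] qdet k n α β ∧ ε (qdet k n α β) = 1 := by
  constructor
  · calc Δ (qdet k n α β)
        = ∑ f : Fin n → Fin n, if Function.Injective f then
            (((-α)⁻¹ ^ inversionCount f) • qProd α β id f) ⊗ₜ[k] qdet k n α β else 0 := by
          rw [map_qdet Δ hΔ]
          refine Finset.sum_congr rfl fun f _ => ?_
          rw [qdetRows_eq β hα]
          split_ifs
          · rw [TensorProduct.tmul_smul, TensorProduct.smul_tmul']
          · rw [TensorProduct.tmul_zero]
      _ = qdet k n α β ⊗ₜ[k] qdet k n α β := by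
          rw [sum_ite_injective_eq_sum_perm, qdet_eq_sum_qProd, TensorProduct.sum_tmul]
          rfl
  · exact counit_qdet ε hε
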